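/- If H is a 4-Ore graph, then T(H) = 1 if and only if H is isomorphic to K4, where T(H) is the maximum number of vertex-disjoint cycles of length at most four in H. -/

import Mathlib

open SimpleGraph

/-- A graph is 4-critical if it is not 3-colorable but every proper subgraph is 3-colorable. -/
def FourCritical {V : Type*} (G : SimpleGraph V) : Prop :=
  ¬ G.Colorable 3 ∧ ∀ H : SimpleGraph V, H < G → H.Colorable 3

/-- `S` is the vertex set of a cycle of length at most four in `G`. -/
def ShortCycleSet {V : Type*} (G : SimpleGraph V) (S : Set V) : Prop :=
  ∃ (v : V) (w : G.Walk v v), w.IsCycle ∧ w.length ≤ 4 ∧ {x | x ∈ w.support} = S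

/-- `maxTri G` (the quantity `T(G)` of the paper) is the maximum number of pairwise
vertex-disjoint cycles of length at most four in `G`. -/
noncomputable def maxTri {V : Type*} (G : SimpleGraph V) : ℕ :=
  sSup {n | ∃ C : Finset (Set V), C.card = n ∧ (∀ S ∈ C, ShortCycleSet G S) ∧
    (C : Set (Set V)).Pairwise Disjoint}

/-- The potential `p(G) = 5|V(G)| - 3|E(G)| - T(G)`. -/
noncomputable def pot {V : Type*} (G : SimpleGraph V) : ℤ :=
  5 * (Nat.card V : ℤ) - 3 * (Nat.card G.edgeSet : ℤ) - (maxTri G : ℤ)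

/-- The graph obtained by the Ore composition of `G₁` (edge side, replaced edge `xy`) and
`G₂` (split side, split vertex `z`, with `A` the set of neighbours of `z` assigned to the
copy `z₁` identified with `x`). -/
def oreGraph {V₁ V₂ : Type*} (G₁ : SimpleGraph V₁) (x y : V₁) (G₂ : SimpleGraph V₂)
    (z : V₂) (A : Set V₂) : SimpleGraph (V₁ ⊕ {v : V₂ // v ≠ z}) :=
  SimpleGraph.fromRel (fun a b =>
    match a, b with
    | Sum.inl a, Sum.inl b => G₁.Adj a b ∧ ¬(a = x ∧ b = y) ∧ ¬(a = y ∧ b = x)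
    | Sum.inr a, Sum.inr b => G₂.Adj a.1 b.1
    | Sum.inl a, Sum.inr b => G₂.Adj z b.1 ∧ ((a = x ∧ b.1 ∈ A) ∨ (a = y ∧ b.1 ∉ A))
    | Sum.inr _, Sum.inl _ => False)

/-- `H` is an Ore composition of `G₁` and `G₂`: an edge `xy` of `G₁` is deleted, a vertex `z`
of `G₂` is split into two vertices of positive degree, which are identified with `x` and `y`. -/
def IsOreComposition {V₁ V₂ V₃ : Type*} (H : SimpleGraph V₃) (G₁ : SimpleGraph V₁)
    (G₂ : SimpleGraph V₂) : Prop :=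
  ∃ (x y : V₁) (z : V₂) (A : Set V₂), G₁.Adj x y ∧
    (A ∩ G₂.neighborSet z).Nonempty ∧ ((G₂.neighborSet z) \ A).Nonempty ∧
    Nonempty (H ≃g oreGraph G₁ x y G₂ z A)

/-- The 4-Ore graphs on vertex sets `Fin n`: obtained from copies of `K₄` by
repeated Ore compositions. -/
inductive FourOreAux : ∀ {n : ℕ}, SimpleGraph (Fin n) → Prop
  | k4 : FourOreAux (⊤ : SimpleGraph (Fin 4))
  | ore {n₁ n₂ n : ℕ} {G₁ : SimpleGraph (Fin n₁)} {G₂ : SimpleGraph (Fin n₂)}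
      {G : SimpleGraph (Fin n)} :
      FourOreAux G₁ → FourOreAux G₂ → IsOreComposition G G₁ G₂ → FourOreAux G

/-- A graph is 4-Ore if it is isomorphic to a 4-Ore graph on some `Fin n`. -/
def IsFourOre {V : Type*} (H : SimpleGraph V) : Prop :=
  ∃ (n : ℕ) (G : SimpleGraph (Fin n)), FourOreAux G ∧ Nonempty (H ≃g G)

/-- `G` contains `K₄` minus an edge as a subgraph (vertices `a,b` of degree three in it). -/
def HasK4MinusE {V : Type*} (G : SimpleGraph V) : Prop :=
  ∃ a b c d : V, a ≠ b ∧ a ≠ c ∧ a ≠ d ∧ b ≠ c ∧ b ≠ d ∧ c ≠ d ∧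
    G.Adj a b ∧ G.Adj a c ∧ G.Adj a d ∧ G.Adj b c ∧ G.Adj b d

/-- `a,b,c,d` form a diamond of `H`: a subgraph isomorphic to `K₄ - e` (with `a,b` its
degree-three vertices) such that `a` and `b` also have degree three in `H`. -/
def IsDiamond {V : Type*} (H : SimpleGraph V) (a b c d : V) : Prop :=
  a ≠ b ∧ a ≠ c ∧ a ≠ d ∧ b ≠ c ∧ b ≠ d ∧ c ≠ d ∧
  H.Adj a b ∧ H.Adj a c ∧ H.Adj a d ∧ H.Adj b c ∧ H.Adj b d ∧
  (H.neighborSet a).ncard = 3 ∧ (H.neighborSet b).ncard = 3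

/-- Splitting the vertex `v` of `G` into two vertices `Sum.inr 0` and `Sum.inr 1`, the
neighbours of `v` in `A` going to the first and the remaining neighbours to the second. -/
def splitGraph {V : Type*} (G : SimpleGraph V) (v : V) (A : Set V) :
    SimpleGraph ({u : V // u ≠ v} ⊕ Fin 2) :=
  SimpleGraph.fromRel (fun a b =>
    match a, b with
    | Sum.inl a, Sum.inl b => G.Adj a.1 b.1
    | Sum.inl a, Sum.inr i => G.Adj v a.1 ∧ ((i = 0 ∧ a.1 ∈ A) ∨ (i = 1 ∧ a.1 ∉ A))
    | _, _ => False)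

/-- The graph `T₈` of the paper. -/
def T8 : SimpleGraph (Fin 8) :=
  SimpleGraph.fromRel (fun a b => (a, b) ∈
    ([(0,1),(1,2),(2,0),(0,3),(3,6),(6,7),(7,3),(2,4),(4,6),(6,5),(5,1),(4,7),(7,5)] :
      List (Fin 8 × Fin 8)))

/-- The graph `T₁₁` of the paper. -/
def T11 : SimpleGraph (Fin 11) :=
  SimpleGraph.fromRel (fun a b => (a, b) ∈
    ([(0,8),(8,10),(10,9),(9,1),(8,9),(10,1),(1,2),(2,0),(0,3),(3,6),(6,7),(7,3),
      (2,4),(4,6),(6,5),(5,1),(4,7),(7,5)] : List (Fin 11 × Fin 11)))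

/-- The wheel `W₅`: a 5-cycle `0,…,4` together with a hub `5` adjacent to all of it. -/
def W5 : SimpleGraph (Fin 6) :=
  SimpleGraph.fromRel (fun a b => (a, b) ∈
    ([(0,1),(1,2),(2,3),(3,4),(4,0),(5,0),(5,1),(5,2),(5,3),(5,4)] : List (Fin 6 × Fin 6)))

/-- The exceptional 4-critical graphs: `K₄`, `H₇` (the 4-Ore graph on seven vertices),
`W₅`, `T₈`, `T₁₁`, and the 4-Ore graphs with `T = 3`. -/
def Exceptional {V : Type*} (G : SimpleGraph V) : Prop :=
  Nonempty (G ≃g (⊤ : SimpleGraph (Fin 4))) ∨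
  (∃ H₇ : SimpleGraph (Fin 7), IsFourOre H₇ ∧ Nonempty (G ≃g H₇)) ∨
  Nonempty (G ≃g W5) ∨ Nonempty (G ≃g T8) ∨ Nonempty (G ≃g T11) ∨
  (IsFourOre G ∧ maxTri G = 3)

/-- `G` is a minimum counterexample to the main theorem: a 4-critical graph with
`p(G) ≥ -1` which is not exceptional, such that every 4-critical graph on fewer vertices
satisfies the conclusion of the main theorem. -/
def MinCounterexample {V : Type*} (G : SimpleGraph V) : Prop :=
  FourCritical G ∧ -1 ≤ pot G ∧ ¬ Exceptional G ∧
  ∀ m : ℕ, m < Nat.card V → ∀ H : SimpleGraph (Fin m), FourCritical H →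
    Exceptional H ∨ pot H ≤ -2

/-- The φ-identification `G_φ(R)`: the color classes of `R` are identified to the three
vertices `Sum.inr i`, which form a triangle. -/
def identGraph {V : Type*} (G : SimpleGraph V) (R : Set V) (φ : V → Fin 3) :
    SimpleGraph ({v : V // v ∉ R} ⊕ Fin 3) :=
  SimpleGraph.fromRel (fun a b =>
    match a, b with
    | Sum.inl a, Sum.inl b => G.Adj a.1 b.1
    | Sum.inl a, Sum.inr i => ∃ r ∈ R, φ r = i ∧ G.Adj a.1 r
    | Sum.inr _, Sum.inr _ => True
    | Sum.inr _, Sum.inl _ => False)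

/-!
Every 4-Ore graph `G` has, for each vertex `v`, a triangle avoiding `v`. This holds in `K₄`, and
it survives Ore composition: in the composition of `G₁` (edge `xy`) and `G₂` (split vertex `z`),
a triangle of `G₁` avoiding `x` (so not using the deleted edge `xy`) and a triangle of `G₂`
avoiding `z` are both still triangles, and they are disjoint, so every vertex is avoided by one of
them. Hence every 4-Ore graph other than `K₄` has two disjoint triangles and `T ≥ 2`, while two
disjoint short cycles do not fit into the four vertices of `K₄`.
-/

open Finset

section ShortCycles

variable {V W : Type*} {G : SimpleGraph V} {G' : SimpleGraph W}

theorem SimpleGraph.IsNClique.map_embedding (f : G ↪g G') {n : ℕ} {s : Finset V}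
    (h : G.IsNClique n s) : G'.IsNClique n (s.map f.toEmbedding) :=
  h.map.mono <| (map_le_iff_le_comap _ _ _).2 (Embedding.comap_eq f).ge

theorem shortCycleSet_of_is3Clique {s : Finset V} (h : G.IsNClique 3 s) :
    ShortCycleSet G (s : Set V) := by
  classical
  obtain ⟨a, b, c, hab, hac, hbc, rfl⟩ := is3Clique_iff.1 h
  refine ⟨a, .cons hab (.cons hbc (.cons hac.symm .nil)), ?_, by simp, ?_⟩
  · simp [Walk.isCycle_def, hab.ne, hac.ne, hbc.ne, hab.ne', hac.ne']
  · ext; simp [or_comm, or_left_comm]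

theorem ShortCycleSet.three_le_ncard {S : Set V} (h : ShortCycleSet G S) : 3 ≤ S.ncard := by
  classical
  obtain ⟨v, w, hw, -, rfl⟩ := h
  have htail : 3 ≤ w.support.tail.toFinset.card := by
    rw [List.toFinset_card_of_nodup hw.support_nodup, List.length_tail, Walk.length_support]
    have := hw.three_le_length
    omega
  calc 3 ≤ w.support.tail.toFinset.card := htail
    _ ≤ w.support.toFinset.card := card_le_card fun x hx ↦ by
        simpa using List.mem_of_mem_tail (List.mem_toFinset.1 hx)
    _ = {x | x ∈ w.support}.ncard := by
        rw [← Set.ncard_coe_finset]; congr 1; ext; simp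

end ShortCycles

section MaxTri

variable {V : Type*} {G : SimpleGraph V}

theorem le_maxTri [Finite V] {C : Finset (Set V)} (hC : ∀ S ∈ C, ShortCycleSet G S)
    (hdisj : (C : Set (Set V)).Pairwise Disjoint) : C.card ≤ maxTri G := by
  have : Fintype (Set V) := Fintype.ofFinite _
  exact le_csSup ⟨Fintype.card (Set V), by rintro _ ⟨C', rfl, -⟩; exact C'.card_le_univ⟩
    ⟨C, rfl, hC, hdisj⟩

theorem maxTri_le {k : ℕ} (h : ∀ C : Finset (Set V), (∀ S ∈ C, ShortCycleSet G S) →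
    (C : Set (Set V)).Pairwise Disjoint → C.card ≤ k) : maxTri G ≤ k :=
  csSup_le' <| by rintro _ ⟨C, rfl, hC, hdisj⟩; exact h C hC hdisj

theorem maxTri_le_one_of_card_lt_six [Finite V] (hV : Nat.card V < 6) : maxTri G ≤ 1 :=
  maxTri_le fun C hC hdisj ↦ by
    by_contra! h
    obtain ⟨S, hS, T, hT, hST⟩ := one_lt_card.1 h
    have hunion := Set.ncard_union_eq (hdisj hS hT hST) (Set.toFinite S) (Set.toFinite T)
    have := (hC S hS).three_le_ncard
    have := (hC T hT).three_le_ncard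
    have := Set.ncard_le_card (S ∪ T)
    omega

theorem one_le_maxTri [Finite V] {s : Finset V} (hs : G.IsNClique 3 s) : 1 ≤ maxTri G := by
  simpa using le_maxTri (C := {(s : Set V)}) (by simpa using shortCycleSet_of_is3Clique hs)
    (by simp)

end MaxTri

section Triangles

variable {V W : Type*} {G : SimpleGraph V} {G' : SimpleGraph W}

def HasTriangleAvoiding (G : SimpleGraph V) (v : V) : Prop :=
  ∃ s : Finset V, G.IsNClique 3 s ∧ v ∉ s

def HasTwoDisjointTriangles (G : SimpleGraph V) : Prop :=
  ∃ s t : Finset V, G.IsNClique 3 s ∧ G.IsNClique 3 t ∧ Disjoint s t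

theorem hasTriangleAvoiding_top_fin_four (v : Fin 4) : HasTriangleAvoiding ⊤ v :=
  ⟨univ.erase v, by simp [isNClique_iff, card_erase_of_mem], by simp⟩

theorem HasTwoDisjointTriangles.hasTriangleAvoiding (h : HasTwoDisjointTriangles G) (v : V) :
    HasTriangleAvoiding G v := by
  obtain ⟨s, t, hs, ht, hst⟩ := h
  by_cases hv : v ∈ s
  · exact ⟨t, ht, disjoint_left.1 hst hv⟩
  · exact ⟨s, hs, hv⟩

theorem HasTwoDisjointTriangles.map (f : G ↪g G') (h : HasTwoDisjointTriangles G) :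
    HasTwoDisjointTriangles G' := by
  obtain ⟨s, t, hs, ht, hst⟩ := h
  exact ⟨_, _, hs.map_embedding f, ht.map_embedding f, disjoint_map _ |>.2 hst⟩

theorem HasTwoDisjointTriangles.two_le_maxTri [Finite V] (h : HasTwoDisjointTriangles G) :
    2 ≤ maxTri G := by
  obtain ⟨s, t, hs, ht, hst⟩ := h
  have hne : (s : Set V) ≠ t := by
    rw [Ne, coe_inj]
    rintro rfl
    simpa [disjoint_self.1 hst] using hs.card_eq
  convert le_maxTri (G := G) (C := {(s : Set V), (t : Set V)}) ?_ ?_ using 1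
  · rw [card_pair hne]
  · simpa using ⟨shortCycleSet_of_is3Clique hs, shortCycleSet_of_is3Clique ht⟩
  · simpa [Set.pairwise_insert, hne] using ⟨hst, hst.symm⟩

end Triangles

section OreComposition

open Sum

variable {V₁ V₂ : Type*} {G₁ : SimpleGraph V₁} {G₂ : SimpleGraph V₂} {x y : V₁} {z : V₂}
  {A : Set V₂}

theorem oreGraph_adj_inl_inl {a b : V₁} :
    (oreGraph G₁ x y G₂ z A).Adj (inl a) (inl b) ↔
      G₁.Adj a b ∧ ¬(a = x ∧ b = y) ∧ ¬(a = y ∧ b = x) := by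
  simp only [oreGraph, fromRel_adj, ne_eq, inl.injEq]
  constructor
  · rintro ⟨-, h | ⟨h, h₁, h₂⟩⟩
    · exact h
    · exact ⟨h.symm, fun ⟨ha, hb⟩ ↦ h₂ ⟨hb, ha⟩, fun ⟨ha, hb⟩ ↦ h₁ ⟨hb, ha⟩⟩
  · exact fun h ↦ ⟨h.1.ne, .inl h⟩

theorem oreGraph_adj_inr_inr {a b : {v : V₂ // v ≠ z}} :
    (oreGraph G₁ x y G₂ z A).Adj (inr a) (inr b) ↔ G₂.Adj a b := by
  simp only [oreGraph, fromRel_adj, ne_eq, inr.injEq, G₂.adj_comm b.1, or_self]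
  exact ⟨And.right, fun h ↦ ⟨fun hab ↦ h.ne (congrArg Subtype.val hab), h⟩⟩

theorem SimpleGraph.IsNClique.map_inl_oreGraph {n : ℕ} {s : Finset V₁} (h : G₁.IsNClique n s)
    (hx : x ∉ s) : (oreGraph G₁ x y G₂ z A).IsNClique n (s.map .inl) := by
  refine ⟨?_, by simp [h.card_eq]⟩
  rintro _ ha _ hb hab
  simp only [coe_map, Set.mem_image, mem_coe] at ha hb
  obtain ⟨a, ha, rfl⟩ := ha
  obtain ⟨b, hb, rfl⟩ := hb
  exact oreGraph_adj_inl_inl.2 ⟨h.isClique ha hb (by simpa using hab),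
    fun ⟨hax, _⟩ ↦ hx (hax ▸ ha), fun ⟨_, hbx⟩ ↦ hx (hbx ▸ hb)⟩

theorem SimpleGraph.IsNClique.map_inr_oreGraph [DecidableEq V₂] {n : ℕ} {s : Finset V₂}
    (h : G₂.IsNClique n s) (hz : z ∉ s) : (oreGraph G₁ x y G₂ z A).IsNClique n ((s.subtype (· ≠ z)).map .inr) := by
  refine ⟨?_, ?_⟩
  · rintro _ ha _ hb hab
    simp only [coe_map, Set.mem_image, mem_coe, mem_subtype] at ha hb
    obtain ⟨a, ha, rfl⟩ := ha
    obtain ⟨b, hb, rfl⟩ := hb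
    exact oreGraph_adj_inr_inr.2 (h.isClique ha hb fun hab' ↦ hab (by rw [Subtype.ext hab']))
  · rw [card_map, card_subtype, filter_true_of_mem fun v hv ↦ ne_of_mem_of_not_mem hv hz,
      h.card_eq]

theorem hasTwoDisjointTriangles_oreGraph (h₁ : HasTriangleAvoiding G₁ x)
    (h₂ : HasTriangleAvoiding G₂ z) : HasTwoDisjointTriangles (oreGraph G₁ x y G₂ z A) := by
  classical
  obtain ⟨s, hs, hx⟩ := h₁
  obtain ⟨t, ht, hz⟩ := h₂
  exact ⟨_, _, hs.map_inl_oreGraph hx, ht.map_inr_oreGraph hz, by simp [Finset.disjoint_left]⟩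

theorem IsOreComposition.hasTwoDisjointTriangles {V : Type*} {G : SimpleGraph V}
    (hc : IsOreComposition G G₁ G₂) (h₁ : ∀ v, HasTriangleAvoiding G₁ v)
    (h₂ : ∀ v, HasTriangleAvoiding G₂ v) : HasTwoDisjointTriangles G := by
  obtain ⟨x, y, z, A, -, -, -, ⟨e⟩⟩ := hc
  exact (hasTwoDisjointTriangles_oreGraph (h₁ x) (h₂ z)).map e.symm.toEmbedding

end OreComposition

theorem FourOreAux.hasTriangleAvoiding {n : ℕ} {G : SimpleGraph (Fin n)} (hG : FourOreAux G)
    (v : Fin n) : HasTriangleAvoiding G v := by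
  induction hG with
  | k4 => exact hasTriangleAvoiding_top_fin_four v
  | ore _ _ hc ih₁ ih₂ => exact (hc.hasTwoDisjointTriangles ih₁ ih₂).hasTriangleAvoiding v

/-- For a 4-Ore graph `H`, `T(H) = 1` if and only if `H` is isomorphic to `K₄`. -/
theorem fourOre_T_eq_one_iff {V : Type*} (H : SimpleGraph V) (hH : IsFourOre H) :
    maxTri H = 1 ↔ Nonempty (H ≃g (⊤ : SimpleGraph (Fin 4))) := by
  obtain ⟨n, G, hG, ⟨e⟩⟩ := hH
  have : Finite V := .of_equiv _ e.toEquiv.symm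
  constructor
  · intro hT
    cases hG with
    | k4 => exact ⟨e⟩
    | ore h₁ h₂ hc =>
      have hT₂ := ((hc.hasTwoDisjointTriangles h₁.hasTriangleAvoiding
        h₂.hasTriangleAvoiding).map e.symm.toEmbedding).two_le_maxTri
      omega
  · rintro ⟨e₄⟩
    have hcard : Nat.card V = 4 := by simpa using Nat.card_congr e₄.toEquiv
    obtain ⟨s, hs, -⟩ := hasTriangleAvoiding_top_fin_four 0
    exact le_antisymm (maxTri_le_one_of_card_lt_six (by omega))
      (one_le_maxTri (hs.map_embedding e₄.symm.toEmbedding))
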